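/- arXiv:2003.11465 — 6 statements merged into one kernel-verified Lean document; each statement's English description precedes it below -/
import Mathlib

section
/- The absolutely closed convex hull of a uniformly p-convergent set in L(X,Y) is uniformly p-convergent. -/
open Filter Topology Metric Bornology ENNReal

noncomputable section

universe u v w

variable {X : Type*} {Y : Type*} {Z : Type*}

section Defs
variable [NormedAddCommGroup X] [NormedSpace ℝ X]
variable [NormedAddCommGroup Y] [NormedSpace ℝ Y]

/-- A sequence is weakly `p`-summable if `(x*(xₙ))ₙ ∈ ℓ_p` for every functional `x*`;
for `p = ∞` we use weakly null sequences. -/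
def WeaklyPSummable (p : ℝ≥0∞) (x : ℕ → X) : Prop :=
  if p = ⊤ then ∀ f : X →L[ℝ] ℝ, Tendsto (fun n => f (x n)) atTop (𝓝 0)
  else ∀ f : X →L[ℝ] ℝ, Memℓp (fun n => f (x n)) p

/-- A set of operators is uniformly `p`-convergent if every weakly `p`-summable
sequence converges to `0` uniformly on the set. -/
def UnifPConvergent (p : ℝ≥0∞) (K : Set (X →L[ℝ] Y)) : Prop :=
  ∀ x : ℕ → X, WeaklyPSummable p x →
    ∀ ε > (0 : ℝ), ∃ N : ℕ, ∀ n ≥ N, ∀ T ∈ K, ‖T (x n)‖ < ε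

/-- A `p`-convergent operator maps weakly `p`-summable sequences to norm-null sequences. -/
def PConvergentOp (p : ℝ≥0∞) (T : X →L[ℝ] Y) : Prop :=
  ∀ x : ℕ → X, WeaklyPSummable p x → Tendsto (fun n => ‖T (x n)‖) atTop (𝓝 0)

/-- A sequence is weakly `p`-Cauchy if all differences along pairs of increasing
index sequences are weakly `p`-summable. -/
def WeaklyPCauchy (p : ℝ≥0∞) (x : ℕ → X) : Prop :=
  ∀ m k : ℕ → ℕ, StrictMono m → StrictMono k →
    WeaklyPSummable p (fun n => x (m n) - x (k n))

/-- A set is weakly `p`-precompact if every sequence in it has a weakly `p`-Cauchy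
subsequence. -/
def WeaklyPPrecompact (p : ℝ≥0∞) (A : Set X) : Prop :=
  ∀ x : ℕ → X, (∀ n, x n ∈ A) →
    ∃ s : ℕ → ℕ, StrictMono s ∧ WeaklyPCauchy p (fun n => x (s n))

/-- `B` is `U`-bounded: bounded and with positive distance to the boundary of `U`. -/
def UBounded (U B : Set X) : Prop :=
  IsBounded B ∧ B ⊆ U ∧ ∃ d > (0 : ℝ), ∀ x ∈ B, ball x d ⊆ U

/-- A set of operators is equicompact if every bounded sequence has a subsequence on
which the operators converge in norm, uniformly on the set. -/
def Equicompact (M : Set (X →L[ℝ] Y)) : Prop :=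
  ∀ x : ℕ → X, IsBounded (Set.range x) →
    ∃ s : ℕ → ℕ, StrictMono s ∧ ∃ g : (X →L[ℝ] Y) → Y,
      TendstoUniformlyOn (fun n T => T (x (s n))) g atTop M

/-- A set of operators is weakly equicompact if every bounded sequence has a
subsequence on which the operators converge weakly, uniformly on the set. -/
def WeaklyEquicompact (M : Set (X →L[ℝ] Y)) : Prop :=
  ∀ x : ℕ → X, IsBounded (Set.range x) →
    ∃ s : ℕ → ℕ, StrictMono s ∧ ∀ φ : Y →L[ℝ] ℝ, ∃ c : (X →L[ℝ] Y) → ℝ,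
      TendstoUniformlyOn (fun n T => φ (T (x (s n)))) c atTop M

/-- A weakly compact operator: the image of every bounded sequence has a weakly
convergent subsequence. -/
def WeaklyCompactOp (T : X →L[ℝ] Y) : Prop :=
  ∀ x : ℕ → X, IsBounded (Set.range x) →
    ∃ s : ℕ → ℕ, StrictMono s ∧ ∃ y : Y,
      ∀ φ : Y →L[ℝ] ℝ, Tendsto (fun n => φ (T (x (s n)))) atTop (𝓝 (φ y))

/-- A space has the `p`-Schur property if weakly `p`-summable sequences are norm null. -/
def PSchur (p : ℝ≥0∞) (W : Type*) [NormedAddCommGroup W] [NormedSpace ℝ W] : Prop :=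
  ∀ x : ℕ → W, WeaklyPSummable p x → Tendsto (fun n => ‖x n‖) atTop (𝓝 0)

/-- A set is relatively weakly `p`-compact if every sequence in it has a subsequence
weakly `p`-convergent to a point of the space. -/
def RelWeaklyPCompact (p : ℝ≥0∞) (A : Set X) : Prop :=
  ∀ x : ℕ → X, (∀ n, x n ∈ A) →
    ∃ s : ℕ → ℕ, StrictMono s ∧ ∃ a : X, WeaklyPSummable p (fun n => x (s n) - a)

/-- `f` is weakly `p`-sequentially continuous on `U` if it maps `U`-bounded weakly
`p`-Cauchy sequences to norm convergent sequences. -/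
def WeaklyPSeqContinuous (p : ℝ≥0∞) (U : Set X) (f : X → Y) : Prop :=
  ∀ x : ℕ → X, (∀ n, x n ∈ U) → UBounded U (Set.range x) → WeaklyPCauchy p x →
    ∃ y : Y, Tendsto (fun n => f (x n)) atTop (𝓝 y)

end Defs
/-- The absolutely closed convex hull of a uniformly `p`-convergent set
in `L(X,Y)` is uniformly `p`-convergent. -/
theorem stmt2 [NormedAddCommGroup X] [NormedSpace ℝ X] [CompleteSpace X]
    [NormedAddCommGroup Y] [NormedSpace ℝ Y] [CompleteSpace Y]
    (p : ℝ≥0∞) (hp : 1 ≤ p) (hp' : p ≠ ⊤)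
    (K : Set (X →L[ℝ] Y)) (hK : UnifPConvergent p K) :
    UnifPConvergent p (closure (absConvexHull ℝ K)) := by
  intro x hx ε hε
  obtain ⟨N, hN⟩ := hK x hx (ε / 2) (by linarith)
  refine ⟨N, fun n hn T hT => ?_⟩
  set S : Set (X →L[ℝ] Y) := {T | ‖T (x n)‖ ≤ ε / 2} with hS
  have hclosed : IsClosed S := by
    have : Continuous fun T : X →L[ℝ] Y => ‖T (x n)‖ :=
      (ContinuousLinearMap.apply ℝ Y (x n)).continuous.norm
    exact isClosed_le this continuous_const
  have habs : AbsConvex ℝ S := by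
    constructor
    · intro a ha T hT
      obtain ⟨U, hU, rfl⟩ := hT
      simp only [hS, Set.mem_setOf_eq] at hU ⊢
      rw [ContinuousLinearMap.smul_apply, norm_smul]
      calc ‖a‖ * ‖U (x n)‖ ≤ 1 * (ε / 2) := by
            apply mul_le_mul ha hU (norm_nonneg _) zero_le_one
        _ = ε / 2 := one_mul _
    · intro T hT U hU a b ha hb hab
      simp only [hS, Set.mem_setOf_eq] at hT hU ⊢
      calc ‖(a • T + b • U) (x n)‖ ≤ ‖a • T (x n)‖ + ‖b • U (x n)‖ := by
            simp only [ContinuousLinearMap.add_apply, ContinuousLinearMap.smul_apply]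
            exact norm_add_le _ _
        _ = a * ‖T (x n)‖ + b * ‖U (x n)‖ := by
            rw [norm_smul, norm_smul, Real.norm_eq_abs, Real.norm_eq_abs,
              abs_of_nonneg ha, abs_of_nonneg hb]
        _ ≤ a * (ε / 2) + b * (ε / 2) := by
            gcongr
        _ = ε / 2 := by rw [← add_mul, hab, one_mul]
  have hsub : closure (absConvexHull ℝ K) ⊆ S := by
    apply closure_minimal _ hclosed
    apply absConvexHull_min _ habs
    intro U hU
    exact le_of_lt (hN n hn U hU)
  exact lt_of_le_of_lt (hsub hT) (by linarith)
end
end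

section
/- The closed unit ball of ℓ_2 (viewed as a subset of ℓ_2* = ℓ_2) is a uniformly 1-convergent set, but not a uniformly 2-convergent set. -/
open Filter Topology Metric Bornology ENNReal

noncomputable section

universe u v w

variable {X : Type*} {Y : Type*} {Z : Type*}

instance fact_one_le_one' : Fact ((1 : ℝ≥0∞) ≤ 1) := ⟨le_refl _⟩
instance fact_one_le_two' : Fact ((1 : ℝ≥0∞) ≤ 2) := ⟨by norm_num⟩

/-!
Choosing signs greedily, so that each new term makes a nonnegative inner product with the
partial sum so far, turns a sequence `(xₙ)` in a real inner product space into partial sums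
`s N` with `∑_{n<N} ‖xₙ‖² ≤ ‖s N‖²` and `|f (s N)| ≤ ∑ₙ |f xₙ|` for every functional `f`.
If `(xₙ)` is weakly `1`-summable, the uniform boundedness principle bounds `‖s N‖`, so
`∑ ‖xₙ‖² < ∞` and `xₙ → 0` in norm. The unit vectors of `ℓ₂` are weakly `2`-summable by
Bessel's inequality but have norm one. By Hahn–Banach, the dual unit ball is uniformly
`p`-convergent exactly when weakly `p`-summable sequences are norm null.
-/

open scoped RealInnerProductSpace

theorem weaklyPSummable_one_iff [NormedAddCommGroup X] [NormedSpace ℝ X] (x : ℕ → X) :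
    WeaklyPSummable 1 x ↔ ∀ f : X →L[ℝ] ℝ, Summable fun n => |f (x n)| := by
  simp only [WeaklyPSummable, if_neg ENNReal.one_ne_top]
  refine forall_congr' fun f => ?_
  rw [memℓp_gen_iff (by norm_num)]
  simp [Real.norm_eq_abs]

theorem unifPConvergent_closedBall_dual_iff [NormedAddCommGroup X] [NormedSpace ℝ X]
    (p : ℝ≥0∞) : UnifPConvergent p (closedBall (0 : X →L[ℝ] ℝ) 1) ↔ PSchur p X := by
  constructor
  · intro h x hx
    rw [Metric.tendsto_atTop]
    intro ε hε
    obtain ⟨N, hN⟩ := h x hx ε hε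
    refine ⟨N, fun n hn => ?_⟩
    obtain ⟨f, hf_norm, hf_apply⟩ := exists_dual_vector'' ℝ (x n)
    simpa [hf_apply] using hN n hn f (mem_closedBall_zero_iff.2 hf_norm)
  · intro h x hx ε hε
    obtain ⟨N, hN⟩ := eventually_atTop.1 ((h x hx).eventually (gt_mem_nhds hε))
    refine ⟨N, fun n hn T hT => ?_⟩
    calc ‖T (x n)‖ ≤ ‖T‖ * ‖x n‖ := T.le_opNorm _
      _ ≤ 1 * ‖x n‖ := by gcongr; exact mem_closedBall_zero_iff.1 hT
      _ < ε := by rw [one_mul]; exact hN n hn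

theorem exists_norm_le_of_forall_abs_apply_le {ι : Type*} [NormedAddCommGroup X]
    [NormedSpace ℝ X] (y : ι → X) (h : ∀ f : X →L[ℝ] ℝ, ∃ C, ∀ i, |f (y i)| ≤ C) :
    ∃ C, ∀ i, ‖y i‖ ≤ C := by
  obtain ⟨C, hC⟩ := banach_steinhaus (g := fun i => NormedSpace.inclusionInDoubleDualLi ℝ (y i)) h
  exact ⟨C, fun i => (NormedSpace.inclusionInDoubleDualLi ℝ).norm_map (y i) ▸ hC i⟩

section InnerProductSpace

variable {E : Type*} [NormedAddCommGroup E] [InnerProductSpace ℝ E]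

def signedPartialSum (x : ℕ → E) : ℕ → E
  | 0 => 0
  | n + 1 => signedPartialSum x n +
      if 0 ≤ ⟪signedPartialSum x n, x n⟫ then x n else -x n

theorem sum_sq_norm_le_sq_norm_signedPartialSum (x : ℕ → E) (N : ℕ) :
    ∑ n ∈ Finset.range N, ‖x n‖ ^ 2 ≤ ‖signedPartialSum x N‖ ^ 2 := by
  induction N with
  | zero => simp [signedPartialSum]
  | succ N ih =>
    set s := signedPartialSum x N
    have h_inner : 0 ≤ ⟪s, if 0 ≤ ⟪s, x N⟫ then x N else -x N⟫ := by
      split_ifs with h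
      · exact h
      · rw [inner_neg_right]; linarith
    have h_norm : ‖if 0 ≤ ⟪s, x N⟫ then x N else -x N‖ = ‖x N‖ := by split_ifs <;> simp
    rw [Finset.sum_range_succ, signedPartialSum, norm_add_sq_real, h_norm]
    linarith

theorem abs_apply_signedPartialSum_le (f : E →L[ℝ] ℝ) (x : ℕ → E) (N : ℕ) :
    |f (signedPartialSum x N)| ≤ ∑ n ∈ Finset.range N, |f (x n)| := by
  induction N with
  | zero => simp [signedPartialSum]
  | succ N ih =>
    have h_term : |f (if 0 ≤ ⟪signedPartialSum x N, x N⟫ then x N else -x N)| = |f (x N)| := by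
      split_ifs <;> simp
    rw [Finset.sum_range_succ, signedPartialSum, map_add]
    exact (abs_add_le _ _).trans (by rw [h_term]; exact add_le_add_left ih _)

theorem summable_sq_norm_of_summable_abs_apply (x : ℕ → E)
    (hx : ∀ f : E →L[ℝ] ℝ, Summable fun n => |f (x n)|) : Summable fun n => ‖x n‖ ^ 2 := by
  obtain ⟨C, hC⟩ := exists_norm_le_of_forall_abs_apply_le (signedPartialSum x) fun f =>
    ⟨∑' n, |f (x n)|, fun N => (abs_apply_signedPartialSum_le f x N).trans
      ((hx f).sum_le_tsum _ fun n _ => abs_nonneg _)⟩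
  refine summable_of_sum_range_le (c := C ^ 2) (fun n => sq_nonneg _) fun N => ?_
  calc ∑ n ∈ Finset.range N, ‖x n‖ ^ 2 ≤ ‖signedPartialSum x N‖ ^ 2 :=
        sum_sq_norm_le_sq_norm_signedPartialSum x N
    _ ≤ C ^ 2 := pow_le_pow_left₀ (norm_nonneg _) (hC N) 2

theorem pSchur_one_of_innerProductSpace : PSchur 1 E := by
  intro x hx
  have h_sq := (summable_sq_norm_of_summable_abs_apply x
    ((weaklyPSummable_one_iff x).1 hx)).tendsto_atTop_zero
  simpa using h_sq.sqrt

theorem Orthonormal.weaklyPSummable_two [CompleteSpace E] {v : ℕ → E} (hv : Orthonormal ℝ v) :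
    WeaklyPSummable 2 v := by
  rw [WeaklyPSummable, if_neg ENNReal.ofNat_ne_top]
  intro f
  have h_riesz : ∀ n, f (v n) = ⟪v n, (InnerProductSpace.toDual ℝ E).symm f⟫ := fun n => by
    rw [real_inner_comm, InnerProductSpace.toDual_symm_apply]
  apply memℓp_gen
  simp only [h_riesz, ENNReal.toReal_ofNat, Real.rpow_two]
  exact hv.inner_products_summable _

theorem not_pSchur_two_of_orthonormal [CompleteSpace E] {v : ℕ → E} (hv : Orthonormal ℝ v) :
    ¬ PSchur 2 E := fun h => by
  have h_one : Tendsto (fun n => ‖v n‖) atTop (𝓝 1) := by simp [hv.1]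
  exact one_ne_zero (tendsto_nhds_unique h_one (h v hv.weaklyPSummable_two))

end InnerProductSpace

/-- The closed unit ball of `ℓ₂* = ℓ₂` is uniformly `1`-convergent but
not uniformly `2`-convergent. -/
theorem stmt6 :
    UnifPConvergent 1 (closedBall (0 : lp (fun _ : ℕ => ℝ) 2 →L[ℝ] ℝ) 1) ∧
    ¬ UnifPConvergent 2 (closedBall (0 : lp (fun _ : ℕ => ℝ) 2 →L[ℝ] ℝ) 1) := by
  rw [unifPConvergent_closedBall_dual_iff, unifPConvergent_closedBall_dual_iff]
  exact ⟨pSchur_one_of_innerProductSpace,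
    not_pSchur_two_of_orthonormal (default : HilbertBasis ℕ ℝ (lp (fun _ : ℕ => ℝ) 2)).orthonormal⟩
end
end

section
/- If the closed unit ball B_X of X is weakly p-precompact, then a bounded subset M of K(X,Y) is equicompact if and only if M is uniformly p-convergent. -/
open Filter Topology Metric Bornology ENNReal

noncomputable section

universe u v w

variable {X : Type*} {Y : Type*} {Z : Type*}

/-!
Weakly `p`-summable sequences are weakly null and (by Banach–Steinhaus) bounded, so any norm
limit of `T (xₙ)` along a subsequence is `0`; an equicompact `M` must therefore send them to `0`
uniformly. Conversely, rescaling into the unit ball, every bounded sequence has a weakly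
`p`-Cauchy subsequence. Uniform `p`-convergence applied to its differences along pairs of
subsequences makes the images uniformly Cauchy on `M`, and completeness of `Y` yields the
uniform limit.
-/

open Set

theorem Memℓp.tendsto_cofinite_zero {ι E : Type*} [NormedAddCommGroup E] {p : ℝ≥0∞}
    {f : ι → E} (hf : Memℓp f p) (hp : p ≠ ⊤) : Tendsto f cofinite (𝓝 0) := by
  rcases eq_or_ne p 0 with rfl | hp₀
  · refine tendsto_nhds_of_eventually_eq ?_
    filter_upwards [hf.finite_dsupport.eventually_cofinite_notMem] with i hi
    simpa using hi
  have hq : 0 < p.toReal := ENNReal.toReal_pos hp₀ hp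
  have hpow : Tendsto (fun i => ‖f i‖ ^ p.toReal) cofinite (𝓝 0) :=
    (hf.summable hq).tendsto_cofinite_zero
  have hroot : Tendsto (fun t : ℝ => t ^ p.toReal⁻¹) (𝓝 0) (𝓝 0) := by
    simpa [Real.zero_rpow (inv_ne_zero hq.ne')] using
      (Real.continuousAt_rpow_const 0 p.toReal⁻¹ (Or.inr (by positivity))).tendsto
  refine tendsto_zero_iff_norm_tendsto_zero.mpr ((hroot.comp hpow).congr fun i => ?_)
  exact Real.rpow_rpow_inv (norm_nonneg _) hq.ne'

theorem exists_strictMono_pair_of_forall_exists_ge {P : ℕ → ℕ → Prop}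
    (h : ∀ N, ∃ a ≥ N, ∃ b ≥ N, P a b) :
    ∃ m k : ℕ → ℕ, StrictMono m ∧ StrictMono k ∧ ∀ n, P (m n) (k n) := by
  choose a ha b hb hP using h
  obtain ⟨φ, hφ, haφ⟩ :=
    strictMono_subseq_of_tendsto_atTop (tendsto_atTop_mono ha tendsto_id)
  obtain ⟨ψ, hψ, hbψ⟩ := strictMono_subseq_of_tendsto_atTop
    ((tendsto_atTop_mono hb tendsto_id).comp hφ.tendsto_atTop)
  exact ⟨a ∘ φ ∘ ψ, b ∘ φ ∘ ψ, haφ.comp hψ, hbψ, fun n => hP _⟩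

theorem UniformCauchySeqOn.exists_tendstoUniformlyOn {α β : Type*} [UniformSpace β]
    [CompleteSpace β] [Nonempty β] {F : ℕ → α → β} {s : Set α}
    (hF : UniformCauchySeqOn F atTop s) : ∃ g : α → β, TendstoUniformlyOn F g atTop s :=
  ⟨fun a => limUnder atTop (F · a),
    hF.tendstoUniformlyOn_of_tendsto fun _ ha => (hF.cauchySeq ha).tendsto_limUnder⟩

section WeaklySummable

variable [NormedAddCommGroup X] [NormedSpace ℝ X] [NormedAddCommGroup Y] [NormedSpace ℝ Y]
  {p : ℝ≥0∞}

theorem isBounded_range_of_forall_dual_bddAbove {ι : Type*} {x : ι → X}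
    (h : ∀ f : StrongDual ℝ X, BddAbove (range fun i => ‖f (x i)‖)) :
    IsBounded (range x) := by
  obtain ⟨C, hC⟩ := banach_steinhaus (g := fun i => NormedSpace.inclusionInDoubleDualLi ℝ (x i))
    fun f => (h f).imp fun C hC i => hC (mem_range_self i)
  refine isBounded_iff_forall_norm_le.mpr ⟨C, ?_⟩
  rintro _ ⟨i, rfl⟩
  simpa only [LinearIsometry.norm_map] using hC i

theorem WeaklyPSummable.tendsto_zero {x : ℕ → X} (hx : WeaklyPSummable p x)
    (f : StrongDual ℝ X) : Tendsto (fun n => f (x n)) atTop (𝓝 0) := by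
  unfold WeaklyPSummable at hx
  split_ifs at hx with hp
  · exact hx f
  · exact Nat.cofinite_eq_atTop ▸ (hx f).tendsto_cofinite_zero hp

theorem WeaklyPSummable.isBounded_range {x : ℕ → X} (hx : WeaklyPSummable p x) :
    IsBounded (range x) :=
  isBounded_range_of_forall_dual_bddAbove fun f => (hx.tendsto_zero f).norm.bddAbove_range

theorem WeaklyPSummable.eq_zero_of_tendsto_comp {x : ℕ → X} (hx : WeaklyPSummable p x)
    (T : X →L[ℝ] Y) {s : ℕ → ℕ} (hs : Tendsto s atTop atTop) {y : Y}
    (hy : Tendsto (fun n => T (x (s n))) atTop (𝓝 y)) : y = 0 := by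
  refine SeparatingDual.eq_zero_of_forall_dual_eq_zero (R := ℝ) fun ψ => ?_
  exact tendsto_nhds_unique ((ψ.continuous.tendsto y).comp hy)
    ((hx.tendsto_zero (ψ.comp T)).comp hs)

theorem WeaklyPSummable.const_smul {x : ℕ → X} (hx : WeaklyPSummable p x) (c : ℝ) :
    WeaklyPSummable p (fun n => c • x n) := by
  unfold WeaklyPSummable at hx ⊢
  split_ifs at hx ⊢
  · simpa using fun f => (hx f).const_mul c
  · simpa using fun f => (hx f).const_mul c

theorem WeaklyPCauchy.const_smul {x : ℕ → X} (hx : WeaklyPCauchy p x) (c : ℝ) :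
    WeaklyPCauchy p (fun n => c • x n) := fun m k hm hk => by
  simpa only [smul_sub] using (hx m k hm hk).const_smul c

theorem WeaklyPPrecompact.exists_weaklyPCauchy_subseq
    (hX : WeaklyPPrecompact p (closedBall (0 : X) 1)) {x : ℕ → X}
    (hx : IsBounded (range x)) :
    ∃ s : ℕ → ℕ, StrictMono s ∧ WeaklyPCauchy p (fun n => x (s n)) := by
  obtain ⟨R, hR₀, hR⟩ := hx.exists_pos_norm_le
  have hball : ∀ n, R⁻¹ • x n ∈ closedBall (0 : X) 1 := fun n => by
    rw [mem_closedBall_zero_iff, norm_smul, norm_inv, Real.norm_of_nonneg hR₀.le,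
      inv_mul_le_one₀ hR₀]
    exact hR _ (mem_range_self n)
  obtain ⟨s, hs, hC⟩ := hX _ hball
  refine ⟨s, hs, ?_⟩
  simpa [smul_inv_smul₀ hR₀.ne'] using hC.const_smul R

end WeaklySummable

section OperatorSets

variable [NormedAddCommGroup X] [NormedSpace ℝ X] [NormedAddCommGroup Y] [NormedSpace ℝ Y]
  {p : ℝ≥0∞} {M : Set (X →L[ℝ] Y)}

theorem Equicompact.unifPConvergent (hM : Equicompact M) : UnifPConvergent p M := by
  intro x hx ε hε
  by_contra! hbad
  obtain ⟨φ, hφ, hφbad⟩ := extraction_of_frequently_atTop (frequently_atTop.mpr hbad)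
  obtain ⟨s, hs, g, hg⟩ :=
    hM (fun n => x (φ n)) (hx.isBounded_range.subset (range_comp_subset_range φ x))
  have hg₀ : ∀ T ∈ M, g T = 0 := fun T hT =>
    hx.eq_zero_of_tendsto_comp T (hφ.comp hs).tendsto_atTop (hg.tendsto_at hT)
  obtain ⟨n, hn⟩ := (Metric.tendstoUniformlyOn_iff.mp hg ε hε).exists
  obtain ⟨T, hT, hεT⟩ := hφbad (s n)
  have hlt := hn T hT
  rw [hg₀ T hT, dist_zero_left] at hlt
  exact hεT.not_gt hlt

theorem UnifPConvergent.uniformCauchySeqOn (hM : UnifPConvergent p M) {x : ℕ → X}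
    (hx : WeaklyPCauchy p x) : UniformCauchySeqOn (fun n T => T (x n)) atTop M := by
  rw [Metric.uniformCauchySeqOn_iff]
  by_contra! hbad
  obtain ⟨ε, hε, hbad⟩ := hbad
  obtain ⟨m, k, hm, hk, hmk⟩ := exists_strictMono_pair_of_forall_exists_ge hbad
  obtain ⟨N, hN⟩ := hM _ (hx m k hm hk) ε hε
  obtain ⟨T, hT, hεT⟩ := hmk N
  have hlt := hN N le_rfl T hT
  rw [map_sub, ← dist_eq_norm] at hlt
  exact hεT.not_gt hlt

theorem UnifPConvergent.equicompact [CompleteSpace Y]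
    (hX : WeaklyPPrecompact p (closedBall (0 : X) 1)) (hM : UnifPConvergent p M) :
    Equicompact M := fun x hx => by
  obtain ⟨s, hs, hxs⟩ := hX.exists_weaklyPCauchy_subseq hx
  exact ⟨s, hs, (hM.uniformCauchySeqOn hxs).exists_tendstoUniformlyOn⟩

end OperatorSets

theorem stmt7_general [NormedAddCommGroup X] [NormedSpace ℝ X]
    [NormedAddCommGroup Y] [NormedSpace ℝ Y] [CompleteSpace Y]
    (p : ℝ≥0∞)
    (hX : WeaklyPPrecompact p (closedBall (0 : X) 1))
    (M : Set (X →L[ℝ] Y)) :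
    Equicompact M ↔ UnifPConvergent p M :=
  ⟨Equicompact.unifPConvergent, UnifPConvergent.equicompact hX⟩

/-- If `B_X` is weakly `p`-precompact, then a bounded set `M` of compact
operators is equicompact iff it is uniformly `p`-convergent. -/
theorem stmt7 [NormedAddCommGroup X] [NormedSpace ℝ X] [CompleteSpace X]
    [NormedAddCommGroup Y] [NormedSpace ℝ Y] [CompleteSpace Y]
    (p : ℝ≥0∞) (hp : 1 ≤ p) (hp' : p ≠ ⊤)
    (hX : WeaklyPPrecompact p (closedBall (0 : X) 1))
    (M : Set (X →L[ℝ] Y)) (hMb : IsBounded M)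
    (hMc : ∀ T ∈ M, IsCompactOperator T) :
    Equicompact M ↔ UnifPConvergent p M :=
  stmt7_general p hX M
end
end

section
/- Suppose B_X is weakly p-precompact and M ⊆ W(X,Y) is a set of weakly compact operators. Then the following are equivalent: (i) M is weakly equicompact; (ii) for every y* ∈ Y*, the set M*(y*) = {T*(y*) : T ∈ M} is a uniformly p-convergent subset of X*; (iii) for every weakly p-summable sequence (x_n) in X, T(x_n) → 0 weakly uniformly in T ∈ M. -/
open Filter Topology Metric Bornology ENNReal

noncomputable section

universe u v w

variable {X : Type*} {Y : Type*} {Z : Type*}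

section Helpers
variable [NormedAddCommGroup X] [NormedSpace ℝ X]
variable [NormedAddCommGroup Y] [NormedSpace ℝ Y]

lemma wps_tendsto_zero {p : ℝ≥0∞} (hp : 1 ≤ p) (hp' : p ≠ ⊤) {x : ℕ → X}
    (h : WeaklyPSummable p x) (f : X →L[ℝ] ℝ) :
    Tendsto (fun n => f (x n)) atTop (𝓝 0) := by
  rw [WeaklyPSummable, if_neg hp'] at h
  have hq : 0 < p.toReal := ENNReal.toReal_pos (by rintro rfl; simp at hp) hp'
  have hs : Summable fun n => ‖f (x n)‖ ^ p.toReal := (memℓp_gen_iff hq).1 (h f)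
  have h0 : Tendsto (fun n => ‖f (x n)‖ ^ p.toReal) atTop (𝓝 0) := hs.tendsto_atTop_zero
  have h1 : Tendsto (fun n => (‖f (x n)‖ ^ p.toReal) ^ (1 / p.toReal)) atTop (𝓝 0) := by
    have := h0.rpow_const (p := 1 / p.toReal) (Or.inr (by positivity))
    rwa [Real.zero_rpow (by positivity)] at this
  have h2 : Tendsto (fun n => ‖f (x n)‖) atTop (𝓝 0) := by
    refine h1.congr fun n => ?_
    rw [← Real.rpow_mul (norm_nonneg _), mul_one_div_cancel hq.ne', Real.rpow_one]
  exact tendsto_zero_iff_norm_tendsto_zero.2 h2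

lemma wps_bounded {p : ℝ≥0∞} (hp : 1 ≤ p) (hp' : p ≠ ⊤) {x : ℕ → X}
    (h : WeaklyPSummable p x) : IsBounded (Set.range x) := by
  have key : ∀ f : X →L[ℝ] ℝ, ∃ C : ℝ, ∀ n, ‖(NormedSpace.inclusionInDoubleDual ℝ X (x n)) f‖ ≤ C := by
    intro f
    have ht : Tendsto (fun n => ‖f (x n)‖) atTop (𝓝 0) := by
      simpa using (wps_tendsto_zero hp hp' h f).norm
    have hb : BddAbove (Set.range fun n => ‖f (x n)‖) := ht.bddAbove_range
    obtain ⟨C, hC⟩ := hb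
    exact ⟨C, fun n => by rw [NormedSpace.dual_def]; exact hC ⟨n, rfl⟩⟩
  obtain ⟨C, hC⟩ := banach_steinhaus key
  rw [isBounded_iff_forall_norm_le]
  refine ⟨C, ?_⟩
  rintro _ ⟨n, rfl⟩
  have : ‖NormedSpace.inclusionInDoubleDualLi (𝕜 := ℝ) (x n)‖ ≤ C := hC n
  rwa [(NormedSpace.inclusionInDoubleDualLi (𝕜 := ℝ)).norm_map] at this

lemma wps_smul {p : ℝ≥0∞} {x : ℕ → X} (c : ℝ)
    (h : WeaklyPSummable p x) : WeaklyPSummable p (fun n => c • x n) := by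
  unfold WeaklyPSummable at h ⊢
  split_ifs with hT
  · rw [if_pos hT] at h
    intro f
    have := (h f).const_mul c
    rw [mul_zero] at this
    refine this.congr fun n => ?_
    simp [mul_comm]
  · rw [if_neg hT] at h
    intro f
    have heq : (fun n => f (c • x n)) = fun n => (c • f) (x n) := by
      funext n; simp
    rw [heq]
    exact h (c • f)

lemma exists_two_strictMono {Q : ℕ → ℕ → Prop} (h : ∀ N, ∃ m ≥ N, ∃ k ≥ N, Q m k) :
    ∃ m k : ℕ → ℕ, StrictMono m ∧ StrictMono k ∧ ∀ j, Q (m j) (k j) := by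
  have h' : ∀ N : ℕ, ∃ q : ℕ × ℕ, N ≤ q.1 ∧ N ≤ q.2 ∧ Q q.1 q.2 := by
    intro N; obtain ⟨m, hm, k, hk, hQ⟩ := h N; exact ⟨(m, k), hm, hk, hQ⟩
  choose g hg1 hg2 hgQ using h'
  let u : ℕ → ℕ × ℕ := fun j => Nat.rec (g 0) (fun _ ih => g (max ih.1 ih.2 + 1)) j
  have hu : ∀ j, u (j + 1) = g (max (u j).1 (u j).2 + 1) := fun j => rfl
  refine ⟨fun j => (u j).1, fun j => (u j).2, ?_, ?_, fun j => by cases j <;> exact hgQ _⟩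
  · refine strictMono_nat_of_lt_succ fun j => ?_
    have := hg1 (max (u j).1 (u j).2 + 1)
    rw [← hu j] at this
    omega
  · refine strictMono_nat_of_lt_succ fun j => ?_
    have := hg2 (max (u j).1 (u j).2 + 1)
    rw [← hu j] at this
    omega

end Helpers
/-- If `B_X` is weakly `p`-precompact and `M ⊆ W(X,Y)`, then:
(i) `M` weakly equicompact ↔ (ii) `M*(y*)` uniformly `p`-convergent in `X*` for all
`y*` ↔ (iii) `T xₙ → 0` weakly uniformly in `T ∈ M` for weakly `p`-summable `(xₙ)`. -/
theorem stmt10 [NormedAddCommGroup X] [NormedSpace ℝ X] [CompleteSpace X]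
    [NormedAddCommGroup Y] [NormedSpace ℝ Y] [CompleteSpace Y]
    (p : ℝ≥0∞) (hp : 1 ≤ p) (hp' : p ≠ ⊤)
    (hX : WeaklyPPrecompact p (closedBall (0 : X) 1))
    (M : Set (X →L[ℝ] Y)) (hM : ∀ T ∈ M, WeaklyCompactOp T) :
    (WeaklyEquicompact M ↔
      ∀ φ : Y →L[ℝ] ℝ, UnifPConvergent p ((fun T : X →L[ℝ] Y => φ.comp T) '' M)) ∧
    ((∀ φ : Y →L[ℝ] ℝ, UnifPConvergent p ((fun T : X →L[ℝ] Y => φ.comp T) '' M)) ↔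
      ∀ x : ℕ → X, WeaklyPSummable p x → ∀ φ : Y →L[ℝ] ℝ, ∀ ε > (0 : ℝ),
        ∃ N : ℕ, ∀ n ≥ N, ∀ T ∈ M, |φ (T (x n))| < ε)  := by
  classical
  have h23 : (∀ φ : Y →L[ℝ] ℝ, UnifPConvergent p ((fun T : X →L[ℝ] Y => φ.comp T) '' M)) ↔
      (∀ x : ℕ → X, WeaklyPSummable p x → ∀ φ : Y →L[ℝ] ℝ, ∀ ε > (0 : ℝ),
        ∃ N : ℕ, ∀ n ≥ N, ∀ T ∈ M, |φ (T (x n))| < ε) := by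
    constructor
    · intro h x hx φ ε hε
      obtain ⟨N, hN⟩ := h φ x hx ε hε
      refine ⟨N, fun n hn T hT => ?_⟩
      have := hN n hn (φ.comp T) ⟨T, hT, rfl⟩
      simpa [Real.norm_eq_abs] using this
    · intro h φ x hx ε hε
      obtain ⟨N, hN⟩ := h x hx φ ε hε
      refine ⟨N, fun n hn S hS => ?_⟩
      obtain ⟨T, hT, rfl⟩ := hS
      simpa [Real.norm_eq_abs] using hN n hn T hT
  have h13 : WeaklyEquicompact M → ∀ x : ℕ → X, WeaklyPSummable p x → ∀ φ : Y →L[ℝ] ℝ,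
      ∀ ε > (0 : ℝ), ∃ N : ℕ, ∀ n ≥ N, ∀ T ∈ M, |φ (T (x n))| < ε := by
    intro hWE x hx φ ε hε
    by_contra hcon
    push_neg at hcon
    obtain ⟨m, k, hm, hk, hQ⟩ := exists_two_strictMono
      (Q := fun n _ => ∃ T ∈ M, ε ≤ |φ (T (x n))|)
      (fun N => by obtain ⟨n, hn, hP⟩ := hcon N; exact ⟨n, hn, n, hn, hP⟩)
    have hbdd : IsBounded (Set.range fun j => x (m j)) :=
      (wps_bounded hp hp' hx).subset (by rintro _ ⟨j, rfl⟩; exact ⟨m j, rfl⟩)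
    obtain ⟨s, hs, hconv⟩ := hWE (fun j => x (m j)) hbdd
    obtain ⟨c, hc⟩ := hconv φ
    have hc0 : ∀ T ∈ M, c T = 0 := by
      intro T hT
      have h1 : Tendsto (fun j => φ (T (x (m (s j))))) atTop (𝓝 (c T)) := hc.tendsto_at hT
      have h2 : Tendsto (fun j => φ (T (x (m (s j))))) atTop (𝓝 0) :=
        (wps_tendsto_zero hp hp' hx (φ.comp T)).comp ((hm.comp hs).tendsto_atTop)
      exact tendsto_nhds_unique h1 h2
    rw [Metric.tendstoUniformlyOn_iff] at hc
    obtain ⟨N, hN⟩ := (hc ε hε).exists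
    obtain ⟨T, hT, hTabs⟩ := hQ (s N)
    have hd := hN T hT
    rw [hc0 T hT, Real.dist_eq, zero_sub, abs_neg] at hd
    exact absurd hd (not_lt.2 hTabs)
  have h31 : (∀ x : ℕ → X, WeaklyPSummable p x → ∀ φ : Y →L[ℝ] ℝ, ∀ ε > (0 : ℝ),
      ∃ N : ℕ, ∀ n ≥ N, ∀ T ∈ M, |φ (T (x n))| < ε) → WeaklyEquicompact M := by
    intro h x hxb
    obtain ⟨C, hC⟩ := isBounded_iff_forall_norm_le.1 hxb
    set R : ℝ := max C 1 with hR
    have hR0 : (0:ℝ) < R := lt_of_lt_of_le one_pos (le_max_right _ _)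
    have hxR : ∀ n, ‖x n‖ ≤ R := fun n => le_trans (hC _ ⟨n, rfl⟩) (le_max_left _ _)
    set y : ℕ → X := fun n => R⁻¹ • x n with hy
    have hyB : ∀ n, y n ∈ closedBall (0:X) 1 := by
      intro n
      rw [mem_closedBall_zero_iff]
      calc ‖y n‖ = R⁻¹ * ‖x n‖ := by
            rw [hy]; dsimp only
            rw [norm_smul, Real.norm_eq_abs, abs_of_pos (by positivity)]
        _ ≤ R⁻¹ * R := by
            have : (0:ℝ) ≤ R⁻¹ := by positivity
            exact mul_le_mul_of_nonneg_left (hxR n) this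
        _ = 1 := inv_mul_cancel₀ hR0.ne'
    obtain ⟨s, hs, hCau⟩ := hX y hyB
    refine ⟨s, hs, ?_⟩
    intro φ
    set F : ℕ → (X →L[ℝ] Y) → ℝ := fun n T => φ (T (x (s n))) with hF
    have hUC : UniformCauchySeqOn F atTop M := by
      rw [Metric.uniformCauchySeqOn_iff]
      by_contra hcon
      push_neg at hcon
      obtain ⟨ε, hε, hcon⟩ := hcon
      obtain ⟨m, k, hm, hk, hQ⟩ := exists_two_strictMono hcon
      have hz : WeaklyPSummable p (fun j => y (s (m j)) - y (s (k j))) := hCau m k hm hk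
      have hw : WeaklyPSummable p (fun j => x (s (m j)) - x (s (k j))) := by
        have h2 := wps_smul R hz
        have hxy : ∀ n, R • y n = x n := by
          intro n; rw [hy]; dsimp only
          rw [smul_smul, mul_inv_cancel₀ hR0.ne', one_smul]
        have heq : (fun j => R • (y (s (m j)) - y (s (k j)))) =
            fun j => x (s (m j)) - x (s (k j)) := by
          funext j
          rw [smul_sub, hxy, hxy]
        rwa [heq] at h2
      obtain ⟨N, hN⟩ := h _ hw φ ε hε
      obtain ⟨T, hT, hTd⟩ := hQ N
      have hlt := hN N le_rfl T hT
      rw [map_sub, map_sub] at hlt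
      simp only [hF] at hTd
      rw [Real.dist_eq] at hTd
      exact absurd hlt (not_lt.2 hTd)
    have hptwise : ∀ T ∈ M, ∃ a : ℝ, Tendsto (fun n => F n T) atTop (𝓝 a) :=
      fun T hT => cauchySeq_tendsto_of_complete (hUC.cauchySeq hT)
    set c : (X →L[ℝ] Y) → ℝ := fun T =>
      if hT : ∃ a : ℝ, Tendsto (fun n => F n T) atTop (𝓝 a) then hT.choose else 0 with hcdef
    refine ⟨c, hUC.tendstoUniformlyOn_of_tendsto ?_⟩
    intro T hT
    have hT' := hptwise T hT
    have : c T = hT'.choose := by rw [hcdef]; exact dif_pos hT'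
    rw [this]
    exact hT'.choose_spec
  exact ⟨⟨fun h => h23.mpr (h13 h), fun h => h31 (h23.mp h)⟩, h23⟩
end
end

section
/- Let U ⊆ X be open convex and f : U → Y differentiable with derivative f' : U → L(X,Y) uniformly continuous on U-bounded sets. If f' is weakly p-sequentially continuous as a map from U into C_p(X,Y) (i.e., maps U-bounded weakly p-Cauchy sequences to norm convergent sequences in C_p(X,Y)), then f is weakly p-sequentially continuous. -/
open Filter Topology Metric Bornology ENNReal

noncomputable section

universe u v w

variable {X : Type*} {Y : Type*} {Z : Type*}

-- test helper lemmas
private lemma exists_pairs_of_not_cauchySeq {W : Type*} [PseudoMetricSpace W] {u : ℕ → W}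
    (h : ¬ CauchySeq u) : ∃ ε > (0:ℝ), ∃ m k : ℕ → ℕ, StrictMono m ∧ StrictMono k ∧
      ∀ n, ε ≤ dist (u (m n)) (u (k n)) := by
  rw [Metric.cauchySeq_iff] at h
  push_neg at h
  obtain ⟨ε, hε, H⟩ := h
  choose a ha b hb hd using H
  refine ⟨ε, hε, ?_⟩
  let g : ℕ → ℕ := fun n => Nat.rec 0 (fun _ N => max (a N) (b N) + 1) n
  have hg : ∀ n, max (a (g n)) (b (g n)) < g (n + 1) := fun n => Nat.lt_succ_self _
  refine ⟨fun n => a (g n), fun n => b (g n), ?_, ?_, fun n => hd (g n)⟩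
  · exact strictMono_nat_of_lt_succ fun n =>
      lt_of_le_of_lt (le_max_left _ _) (lt_of_lt_of_le (hg n) (ha _))
  · exact strictMono_nat_of_lt_succ fun n =>
      lt_of_le_of_lt (le_max_right _ _) (lt_of_lt_of_le (hg n) (hb _))

private lemma memℓp_of_norm_le {p : ℝ≥0∞} (hp0 : p ≠ 0) (hpt : p ≠ ⊤) {u v : ℕ → ℝ}
    (hv : Memℓp v p) (h : ∀ n, ‖u n‖ ≤ ‖v n‖) : Memℓp u p := by
  have hpr : 0 < p.toReal := ENNReal.toReal_pos hp0 hpt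
  rw [memℓp_gen_iff hpr] at hv ⊢
  exact hv.of_nonneg_of_le (fun n => Real.rpow_nonneg (norm_nonneg _) _)
    (fun n => Real.rpow_le_rpow (norm_nonneg _) (h n) hpr.le)

private lemma convex_aux {X : Type*} [NormedAddCommGroup X] [NormedSpace ℝ X] {U : Set X}
    (hUc : Convex ℝ U) {a b : X} (ha : a ∈ U) (hb : b ∈ U) {t : ℝ}
    (ht : t ∈ Set.Icc (0:ℝ) 1) : a + t • (b - a) ∈ U := by
  have := hUc ha hb (sub_nonneg.mpr ht.2) ht.1 (by ring)
  convert this using 1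
  module

private lemma exists_deriv_point {X Y : Type*} [NormedAddCommGroup X] [NormedSpace ℝ X]
    [NormedAddCommGroup Y] [NormedSpace ℝ Y] {U : Set X} (hUc : Convex ℝ U)
    {f : X → Y} {f' : X → X →L[ℝ] Y} (hd : ∀ x ∈ U, HasFDerivAt f (f' x) x)
    {a b : X} (ha : a ∈ U) (hb : b ∈ U) {ε : ℝ} (hε : 0 < ε)
    (h : ε ≤ ‖f b - f a‖) :
    ∃ t ∈ Set.Icc (0:ℝ) 1, ε / 2 ≤ ‖f' (a + t • (b - a)) (b - a)‖ := by
  by_contra hcon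
  push_neg at hcon
  set g : ℝ → Y := fun t => f (a + t • (b - a)) with hgdef
  have hgd : ∀ t ∈ Set.Icc (0:ℝ) 1,
      HasDerivWithinAt g (f' (a + t • (b - a)) (b - a)) (Set.Icc 0 1) t := by
    intro t ht
    have h1 : HasDerivAt (fun s : ℝ => a + s • (b - a)) (b - a) t := by
      simpa using ((hasDerivAt_id t).smul_const (b - a)).const_add a
    exact (((hd _ (convex_aux hUc ha hb ht)).comp_hasDerivAt t h1)).hasDerivWithinAt
  have hb2 : ‖g 1 - g 0‖ ≤ ε / 2 :=
    norm_image_sub_le_of_norm_deriv_le_segment_01' hgd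
      (fun t ht => (hcon t ⟨ht.1, ht.2.le⟩).le)
  have e1 : g 1 = f b := by simp [hgdef]
  have e0 : g 0 = f a := by simp [hgdef]
  rw [e1, e0] at hb2
  linarith

/-- If `f ∈ C^{1u}(U,Y)` and `f'` is weakly `p`-sequentially continuous
as a map from `U` into `C_p(X,Y)`, then `f` is weakly `p`-sequentially continuous. -/
theorem stmt16 [NormedAddCommGroup X] [NormedSpace ℝ X] [CompleteSpace X]
    [NormedAddCommGroup Y] [NormedSpace ℝ Y] [CompleteSpace Y]
    (p : ℝ≥0∞) (hp : 1 ≤ p)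
    (U : Set X) (hU : IsOpen U) (hUc : Convex ℝ U)
    (f : X → Y) (f' : X → X →L[ℝ] Y)
    (hd : ∀ x ∈ U, HasFDerivAt f (f' x) x)
    (hu : ∀ B : Set X, UBounded U B → UniformContinuousOn f' B)
    (hwsc : ∀ x : ℕ → X, (∀ n, x n ∈ U) → UBounded U (Set.range x) →
      WeaklyPCauchy p x → ∃ T : X →L[ℝ] Y, PConvergentOp p T ∧
        Tendsto (fun n => f' (x n)) atTop (𝓝 T)) :
    WeaklyPSeqContinuous p U f := by
  intro x hxU hxb hxc
  suffices key : CauchySeq (fun n => f (x n)) from cauchySeq_tendsto_of_complete key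
  by_contra hnc
  obtain ⟨ε, hε, m, k, hm, hk, hsep⟩ := exists_pairs_of_not_cauchySeq hnc
  obtain ⟨hbdd, hsub, d, hd0, hball⟩ := hxb
  obtain ⟨R, hR⟩ := isBounded_iff_forall_norm_le.mp hbdd
  have hRx : ∀ n, ‖x n‖ ≤ R := fun n => hR _ ⟨n, rfl⟩
  have hsep' : ∀ n, ε ≤ ‖f (x (m n)) - f (x (k n))‖ := by
    intro n; rw [← dist_eq_norm]; exact hsep n
  choose t ht hlow using fun n =>
    exists_deriv_point hUc hd (hxU (k n)) (hxU (m n)) hε (hsep' n)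
  set z : ℕ → X := fun n => x (m n) - x (k n) with hzdef
  set c : ℕ → X := fun n => x (k n) + t n • z n with hcdef
  have hzb : ∀ n, ‖z n‖ ≤ R + R := fun n =>
    le_trans (norm_sub_le _ _) (add_le_add (hRx _) (hRx _))
  have ht0 : ∀ n, |t n| ≤ 1 := fun n => abs_le.mpr ⟨by linarith [(ht n).1], (ht n).2⟩
  -- c n ∈ U
  have hcU : ∀ n, c n ∈ U := fun n => convex_aux hUc (hxU (k n)) (hxU (m n)) (ht n)
  -- U-bounded
  have hcUB : UBounded U (Set.range c) := by
    refine ⟨isBounded_iff_forall_norm_le.mpr ⟨R + (R + R), ?_⟩, ?_, d, hd0, ?_⟩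
    · rintro _ ⟨n, rfl⟩
      calc ‖c n‖ ≤ ‖x (k n)‖ + ‖t n • z n‖ := norm_add_le _ _
        _ ≤ R + (R + R) := by
            rw [norm_smul]
            have : |t n| * ‖z n‖ ≤ 1 * (R + R) :=
              mul_le_mul (ht0 n) (hzb n) (norm_nonneg _) zero_le_one
            simp only [Real.norm_eq_abs]
            linarith [hRx (k n)]
    · rintro _ ⟨n, rfl⟩; exact hcU n
    · rintro _ ⟨n, rfl⟩ y hy
      rw [mem_ball_iff_norm] at hy
      set w : X := y - c n with hwdef
      have ha' : x (k n) + w ∈ U := by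
        apply hball (x (k n)) ⟨k n, rfl⟩
        rw [mem_ball_iff_norm]; simpa using hy
      have hb' : x (m n) + w ∈ U := by
        apply hball (x (m n)) ⟨m n, rfl⟩
        rw [mem_ball_iff_norm]; simpa using hy
      have hy' : y = (x (k n) + w) + t n • ((x (m n) + w) - (x (k n) + w)) := by
        have : y = c n + w := by simp [hwdef]
        rw [this, hcdef]; simp only [hzdef]; module
      rw [hy']
      exact convex_aux hUc ha' hb' (ht n)
  -- weakly p-Cauchy
  have hp0 : p ≠ 0 := fun h => by simp [h] at hp
  have hcWC : WeaklyPCauchy p c := by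
    intro a b haM hbM
    have h1 := hxc (k ∘ a) (k ∘ b) (hk.comp haM) (hk.comp hbM)
    have h2 := hxc (m ∘ a) (k ∘ a) (hm.comp haM) (hk.comp haM)
    have h3 := hxc (m ∘ b) (k ∘ b) (hm.comp hbM) (hk.comp hbM)
    have key : ∀ (φ : X →L[ℝ] ℝ) j, φ (c (a j) - c (b j)) =
        φ (x (k (a j)) - x (k (b j))) +
          (t (a j) * φ (x (m (a j)) - x (k (a j))) -
            t (b j) * φ (x (m (b j)) - x (k (b j)))) := by
      intro φ j
      simp only [hcdef, hzdef, map_sub, map_add, map_smul, smul_eq_mul]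
      ring
    by_cases hpt : p = ⊤
    · simp only [WeaklyPSummable, if_pos hpt] at h1 h2 h3 ⊢
      intro φ
      have T2 : Tendsto (fun j => t (a j) * φ (x (m (a j)) - x (k (a j)))) atTop (𝓝 0) := by
        have hn := (h2 φ).norm
        rw [norm_zero] at hn
        refine squeeze_zero_norm (fun j => ?_) hn
        rw [norm_mul, Real.norm_eq_abs (t (a j))]
        exact mul_le_of_le_one_left (norm_nonneg _) (ht0 _)
      have T3 : Tendsto (fun j => t (b j) * φ (x (m (b j)) - x (k (b j)))) atTop (𝓝 0) := by
        have hn := (h3 φ).norm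
        rw [norm_zero] at hn
        refine squeeze_zero_norm (fun j => ?_) hn
        rw [norm_mul, Real.norm_eq_abs (t (b j))]
        exact mul_le_of_le_one_left (norm_nonneg _) (ht0 _)
      have := (h1 φ).add (T2.sub T3)
      rw [show ((0:ℝ) + (0 - 0)) = 0 by ring] at this
      exact this.congr fun j => (key φ j).symm
    · simp only [WeaklyPSummable, if_neg hpt] at h1 h2 h3 ⊢
      intro φ
      have e : (fun j => φ (c (a j) - c (b j))) =
          (fun j => φ (x (k (a j)) - x (k (b j)))) +
            ((fun j => t (a j) * φ (x (m (a j)) - x (k (a j)))) -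
              (fun j => t (b j) * φ (x (m (b j)) - x (k (b j))))) := by
        funext j; exact key φ j
      rw [e]
      refine (h1 φ).add (Memℓp.sub ?_ ?_)
      · refine memℓp_of_norm_le hp0 hpt (h2 φ) fun j => ?_
        rw [norm_mul, Real.norm_eq_abs (t (a j))]
        exact mul_le_of_le_one_left (norm_nonneg _) (ht0 _)
      · refine memℓp_of_norm_le hp0 hpt (h3 φ) fun j => ?_
        rw [norm_mul, Real.norm_eq_abs (t (b j))]
        exact mul_le_of_le_one_left (norm_nonneg _) (ht0 _)
  obtain ⟨S, hSconv, hSt⟩ := hwsc c hcU hcUB hcWC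
  have hzsum : WeaklyPSummable p z := hxc m k hm hk
  have hTz : Tendsto (fun n => ‖S (z n)‖) atTop (𝓝 0) := hSconv z hzsum
  have hnorm : Tendsto (fun n => ‖f' (c n) - S‖) atTop (𝓝 0) :=
    tendsto_iff_norm_sub_tendsto_zero.mp hSt
  have hRHS : Tendsto (fun n => ‖f' (c n) - S‖ * (R + R) + ‖S (z n)‖) atTop (𝓝 0) := by
    have := (hnorm.mul_const (R + R)).add hTz
    simpa using this
  have hbound : ∀ n, ε / 2 ≤ ‖f' (c n) - S‖ * (R + R) + ‖S (z n)‖ := by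
    intro n
    have h1 : ε / 2 ≤ ‖f' (c n) (z n)‖ := hlow n
    have h2 : ‖f' (c n) (z n)‖ ≤ ‖(f' (c n) - S) (z n)‖ + ‖S (z n)‖ := by
      have : f' (c n) (z n) = (f' (c n) - S) (z n) + S (z n) := by
        simp [ContinuousLinearMap.sub_apply]
      rw [this]; exact norm_add_le _ _
    have h3 : ‖(f' (c n) - S) (z n)‖ ≤ ‖f' (c n) - S‖ * (R + R) :=
      le_trans ((f' (c n) - S).le_opNorm (z n))
        (mul_le_mul_of_nonneg_left (hzb n) (norm_nonneg _))
    linarith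
  have : ε / 2 ≤ 0 := ge_of_tendsto' hRHS hbound
  linarith
end
end

section
/- Let U ⊆ X be open convex and f : U → Y a differentiable mapping such that for every U-bounded set K ⊆ U, f'(K) is a uniformly p-convergent subset of L(X,Y). Then f is weakly p-sequentially continuous: f maps U-bounded weakly p-Cauchy sequences to norm convergent sequences. -/
open Filter Topology Metric Bornology ENNReal

noncomputable section

universe u v w

variable {X : Type*} {Y : Type*} {Z : Type*}

/-! The mean value inequality along segments bounds `‖f a - f b‖` by `sup ‖f' z (a - b)‖` over
`z ∈ [a, b]`. For a `U`-bounded weakly `p`-Cauchy sequence `(xₙ)`, its convex hull `K` is again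
`U`-bounded, so `f' '' K` is uniformly `p`-convergent and `‖f (x (m n)) - f (x (k n))‖ → 0` for all
increasing `m`, `k`; this forces `(f (xₙ))` to be Cauchy. -/

section
variable [NormedAddCommGroup X] [NormedSpace ℝ X] [NormedAddCommGroup Y] [NormedSpace ℝ Y]

theorem Convex.norm_image_sub_le_of_norm_hasFDerivWithin_apply_le
    {f : X → Y} {f' : X → X →L[ℝ] Y} {s : Set X} {x y : X} {C : ℝ} (hs : Convex ℝ s)
    (hf : ∀ z ∈ s, HasFDerivWithinAt f (f' z) s z) (bound : ∀ z ∈ s, ‖f' z (y - x)‖ ≤ C)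
    (hx : x ∈ s) (hy : y ∈ s) : ‖f y - f x‖ ≤ C := by
  set g := (AffineMap.lineMap x y : ℝ → X)
  have hg : Set.MapsTo g (Set.Icc 0 1) s := hs.mapsTo_lineMap hx hy
  have hD : ∀ t ∈ Set.Icc (0 : ℝ) 1,
      HasDerivWithinAt (f ∘ g) (f' (g t) (y - x)) (Set.Icc 0 1) t := fun t ht => by
    simpa using (hf (g t) (hg ht)).comp_hasDerivWithinAt t AffineMap.hasDerivWithinAt_lineMap hg
  simpa [g] using norm_image_sub_le_of_norm_deriv_le_segment_01' hD
    fun t ht => bound _ (hg (Set.Ico_subset_Icc_self ht))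

theorem Convex.setOf_ball_subset {U : Set X} (hU : Convex ℝ U) (d : ℝ) :
    Convex ℝ {y : X | ball y d ⊆ U} := by
  have : {y : X | ball y d ⊆ U} = ⋂ w ∈ ball (0 : X) d, (fun y => w + y) ⁻¹' U := by
    ext y
    simp only [Set.mem_ofPred_eq, Set.subset_def, mem_ball, dist_eq_norm, Set.mem_iInter,
      Set.mem_preimage, sub_zero]
    exact ⟨fun h w hw => h _ (by simpa using hw), fun h z hz => by simpa using h (z - y) hz⟩
  rw [this]
  exact convex_iInter₂ fun w _ => hU.translate_preimage_right w

theorem UBounded.convexHull {U B : Set X} (hB : UBounded U B) (hU : Convex ℝ U) :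
    UBounded U (convexHull ℝ B) := by
  obtain ⟨hBb, hBU, d, hd, hball⟩ := hB
  exact ⟨isBounded_convexHull.2 hBb, convexHull_min hBU hU, d, hd,
    fun y hy => convexHull_min hball (hU.setOf_ball_subset d) hy⟩

theorem cauchySeq_of_tendsto_dist_strictMono {α : Type*} [PseudoMetricSpace α] {u : ℕ → α}
    (h : ∀ m k : ℕ → ℕ, StrictMono m → StrictMono k →
      Tendsto (fun n => dist (u (m n)) (u (k n))) atTop (𝓝 0)) : CauchySeq u := by
  by_contra hu
  obtain ⟨ε, hε, hfar⟩ : ∃ ε > 0, ∀ N, ∃ a ≥ N, ∃ b ≥ N, ε ≤ dist (u a) (u b) := by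
    simpa [Metric.cauchySeq_iff] using hu
  choose a ha b hb hab using hfar
  obtain ⟨φ, hφ, haφ⟩ := strictMono_subseq_of_id_le ha
  obtain ⟨ψ, hψ, hbψ⟩ := strictMono_subseq_of_id_le fun n => (hφ.id_le n).trans (hb (φ n))
  obtain ⟨n, hn⟩ := ((h _ _ (haφ.comp hψ) hbψ).eventually (gt_mem_nhds hε)).exists
  exact (hab (φ (ψ n))).not_gt hn

theorem UnifPConvergent.tendsto_dist_image
    {p : ℝ≥0∞} {f : X → Y} {f' : X → X →L[ℝ] Y} {K : Set X} (hK : Convex ℝ K)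
    (hf : ∀ z ∈ K, HasFDerivAt f (f' z) z) (hconv : UnifPConvergent p (f' '' K))
    {a b : ℕ → X} (ha : ∀ n, a n ∈ K) (hb : ∀ n, b n ∈ K)
    (hab : WeaklyPSummable p fun n => a n - b n) :
    Tendsto (fun n => dist (f (a n)) (f (b n))) atTop (𝓝 0) := by
  refine Metric.tendsto_atTop.2 fun ε hε => ?_
  obtain ⟨N, hN⟩ := hconv _ hab (ε / 2) (half_pos hε)
  refine ⟨N, fun n hn => ?_⟩
  have : dist (f (a n)) (f (b n)) ≤ ε / 2 :=
    (dist_eq_norm _ _).trans_le <| hK.norm_image_sub_le_of_norm_hasFDerivWithin_apply_le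
      (fun z hz => (hf z hz).hasFDerivWithinAt)
      (fun z hz => (hN n hn _ ⟨z, hz, rfl⟩).le) (hb n) (ha n)
  rw [Real.dist_0_eq_abs, abs_of_nonneg dist_nonneg]
  linarith

end

theorem stmt17_general [NormedAddCommGroup X] [NormedSpace ℝ X]
    [NormedAddCommGroup Y] [NormedSpace ℝ Y] [CompleteSpace Y]
    (p : ℝ≥0∞)
    (U : Set X) (hUc : Convex ℝ U)
    (f : X → Y) (f' : X → X →L[ℝ] Y)
    (hd : ∀ x ∈ U, HasFDerivAt f (f' x) x)
    (hK : ∀ K : Set X, UBounded U K → UnifPConvergent p (f' '' K)) :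
    WeaklyPSeqContinuous p U f := by
  intro x _ hx hC
  have hKU := hx.convexHull hUc
  have hmem : ∀ n, x n ∈ convexHull ℝ (Set.range x) := fun n => subset_convexHull ℝ _ ⟨n, rfl⟩
  refine cauchySeq_tendsto_of_complete <| cauchySeq_of_tendsto_dist_strictMono fun m k hm hk =>
    (hK _ hKU).tendsto_dist_image (convex_convexHull ℝ _) (fun z hz => hd z (hKU.2.1 hz))
      (fun n => hmem (m n)) (fun n => hmem (k n)) (hC m k hm hk)

/-- If `f : U → Y` is differentiable and `f'` maps `U`-bounded sets to
uniformly `p`-convergent subsets of `L(X,Y)`, then `f` is weakly `p`-sequentially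
continuous. -/
theorem stmt17 [NormedAddCommGroup X] [NormedSpace ℝ X] [CompleteSpace X]
    [NormedAddCommGroup Y] [NormedSpace ℝ Y] [CompleteSpace Y]
    (p : ℝ≥0∞) (hp : 1 ≤ p)
    (U : Set X) (hU : IsOpen U) (hUc : Convex ℝ U)
    (f : X → Y) (f' : X → X →L[ℝ] Y)
    (hd : ∀ x ∈ U, HasFDerivAt f (f' x) x)
    (hK : ∀ K : Set X, UBounded U K → UnifPConvergent p (f' '' K)) :
    WeaklyPSeqContinuous p U f :=
  stmt17_general p U hUc f f' hd hK
end
end
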